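/- (Lemma 2, plane-embedding form) Let ρ_lex = (S_1, …, S_n) be the lexicographic ranking of n unit squares with pairwise distinct centers c_1 < c_2 < ⋯ < c_n (lexicographically). For any four pairwise distinct indices i < j and k < ℓ with {i, j} ∩ {k, ℓ} = ∅, if the closed segments [c_i, c_j] and [c_k, c_ℓ] have a common point, then {S_i, S_j} and {S_k, S_ℓ} are not both edges of the visibility graph G(ρ_lex). Consequently, mapping each square S_i to its center c_i gives a straight-line plane embedding of G(ρ_lex). -/
import Mathlib


/-- The unit square with center `c`: the closed ℓ∞-ball of radius 1
(the product metric on `ℝ × ℝ` is the sup metric). -/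
def UnitSq (c : ℝ × ℝ) : Set (ℝ × ℝ) := Metric.closedBall c 1

/-- Strict lexicographic order on `ℝ × ℝ`. -/
def LexLt (a b : ℝ × ℝ) : Prop := a.1 < b.1 ∨ (a.1 = b.1 ∧ a.2 < b.2)

/-- `p` lies in the axis-parallel rectangle spanned by `a` and `b`. -/
def InRect (p a b : ℝ × ℝ) : Prop :=
  min a.1 b.1 ≤ p.1 ∧ p.1 ≤ max a.1 b.1 ∧ min a.2 b.2 ≤ p.2 ∧ p.2 ≤ max a.2 b.2

/-- In the ranking given by the sequence of centers `c`, square `i` sees square `k`: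
some point of `S(c i) ∩ S(c k)` avoids all squares ranked strictly between them. -/
def Sees {n : ℕ} (c : Fin n → ℝ × ℝ) (i k : Fin n) : Prop :=
  ∃ p ∈ UnitSq (c i) ∩ UnitSq (c k), ∀ j : Fin n, i < j → j < k → p ∉ UnitSq (c j)

lemma mem_unitSq {p c : ℝ × ℝ} : p ∈ UnitSq c ↔ |p.1 - c.1| ≤ 1 ∧ |p.2 - c.2| ≤ 1 := by
  simp [UnitSq, Metric.mem_closedBall, Prod.dist_eq, Real.dist_eq, max_le_iff]

lemma case1R (a1 a2 b1 b2 d1 d2 e1 e2 t u : ℝ)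
    (ht0 : 0 ≤ t) (ht1 : t ≤ 1) (hu0 : 0 ≤ u) (hu1 : u ≤ 1)
    (hab : a1 < b1 ∨ (a1 = b1 ∧ a2 < b2))
    (hbd : b1 < d1 ∨ (b1 = d1 ∧ b2 < d2))
    (hde : d1 < e1 ∨ (d1 = e1 ∧ d2 < e2))
    (h1 : (1-t)*a1 + t*b1 = (1-u)*d1 + u*e1)
    (h2 : (1-t)*a2 + t*b2 = (1-u)*d2 + u*e2) : False := by
  have hab1 : a1 ≤ b1 := by rcases hab with h | ⟨h, _⟩ <;> linarith
  have hbd1 : b1 ≤ d1 := by rcases hbd with h | ⟨h, _⟩ <;> linarith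
  have hde1 : d1 ≤ e1 := by rcases hde with h | ⟨h, _⟩ <;> linarith
  have k1 : (1-t)*a1 + t*b1 ≤ b1 := by nlinarith
  have k2 : d1 ≤ (1-u)*d1 + u*e1 := by nlinarith
  have hbd' : b1 = d1 := by linarith
  have hbd2 : b2 < d2 := by
    rcases hbd with h | ⟨_, h⟩
    · linarith
    · exact h
  have hq2b : (1-t)*a2 + t*b2 ≤ b2 := by
    rcases hab with h | ⟨h, h'⟩
    · have hq1 : (1-t)*a1 + t*b1 = b1 := le_antisymm k1 (by linarith)
      have ht : t = 1 := by nlinarith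
      rw [ht]; nlinarith
    · nlinarith
  have hq2d : d2 ≤ (1-u)*d2 + u*e2 := by
    rcases hde with h | ⟨h, h'⟩
    · have hq1 : (1-u)*d1 + u*e1 = d1 := le_antisymm (by linarith) k2
      have hu : u = 0 := by nlinarith
      rw [hu]; nlinarith
    · nlinarith
  linarith

lemma cvx_le (x y m u : ℝ) (hu0 : 0 ≤ u) (hu1 : u ≤ 1) (hx : x ≤ m) (hy : y ≤ m) :
    (1-u)*x + u*y ≤ m := by nlinarith
lemma cvx_ge (x y m u : ℝ) (hu0 : 0 ≤ u) (hu1 : u ≤ 1) (hx : m ≤ x) (hy : m ≤ y) :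
    m ≤ (1-u)*x + u*y := by nlinarith
lemma cvx_lt (x y m u : ℝ) (hu0 : 0 ≤ u) (hu1 : u ≤ 1) (hx : x < m) (hy : y < m) :
    (1-u)*x + u*y < m := by
  rcases le_total x y with h | h
  · nlinarith [mul_nonneg (by linarith : (0:ℝ) ≤ 1-u) (by linarith : (0:ℝ) ≤ y - x)]
  · nlinarith [mul_nonneg hu0 (by linarith : (0:ℝ) ≤ x - y)]
lemma cvx_gt (x y m u : ℝ) (hu0 : 0 ≤ u) (hu1 : u ≤ 1) (hx : m < x) (hy : m < y) :
    m < (1-u)*x + u*y := by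
  rcases le_total x y with h | h
  · nlinarith [mul_nonneg hu0 (by linarith : (0:ℝ) ≤ y - x)]
  · nlinarith [mul_nonneg (by linarith : (0:ℝ) ≤ 1-u) (by linarith : (0:ℝ) ≤ x - y)]

lemma case3R (a1 a2 b1 b2 d1 d2 e1 e2 p1 p2 P1 P2 t u : ℝ)
    (ht0 : 0 ≤ t) (ht1 : t ≤ 1) (hu0 : 0 ≤ u) (hu1 : u ≤ 1)
    (had : a1 ≤ d1) (hdb : d1 ≤ b1) (hbe : b1 ≤ e1)
    (tad : a1 = d1 → a2 < d2) (tdb : d1 = b1 → d2 < b2)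
    (hpa1 : |p1-a1| ≤ 1) (hpa2 : |p2-a2| ≤ 1) (hpb1 : |p1-b1| ≤ 1) (hpb2 : |p2-b2| ≤ 1)
    (hnd : ¬(|p1-d1| ≤ 1 ∧ |p2-d2| ≤ 1))
    (hPd1 : |P1-d1| ≤ 1) (hPd2 : |P2-d2| ≤ 1) (hPe1 : |P1-e1| ≤ 1) (hPe2 : |P2-e2| ≤ 1)
    (hnb : ¬(|P1-b1| ≤ 1 ∧ |P2-b2| ≤ 1))
    (h1 : (1-t)*a1 + t*b1 = (1-u)*d1 + u*e1)
    (h2 : (1-t)*a2 + t*b2 = (1-u)*d2 + u*e2) : False := by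
  rw [abs_le] at hpa1 hpa2 hpb1 hpb2 hPd1 hPd2 hPe1 hPe2
  have hd1 : |p1-d1| ≤ 1 := abs_le.2 ⟨by linarith [hpb1.1], by linarith [hpa1.2]⟩
  have hb1 : |P1-b1| ≤ 1 := abs_le.2 ⟨by linarith [hPe1.1], by linarith [hPd1.2]⟩
  have hd2 : 1 < |p2-d2| := not_le.1 fun h => hnd ⟨hd1, h⟩
  have hb2 : 1 < |P2-b2| := not_le.1 fun h => hnb ⟨hb1, h⟩
  have z : (b1-a1)*(((1-t)*a2+t*b2) - a2) - (b2-a2)*(((1-t)*a1+t*b1) - a1) = 0 := by ring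
  rw [h1, h2] at z
  have key : (b1-a1)*(((1-u)*d2+u*e2) - a2) - (b2-a2)*(((1-u)*d1+u*e1) - a1)
      = (1-u)*((b1-a1)*(d2-a2) - (b2-a2)*(d1-a1))
        + u*((b1-a1)*(e2-a2) - (b2-a2)*(e1-a1)) := by ring
  rw [key] at z
  rcases abs_cases (p2-d2) with ⟨hc, _⟩ | ⟨hc, _⟩ <;> rw [hc] at hd2
  · -- Case B : d strictly below p-band, d2 < p2 - 1
    have ha2d : d2 < a2 := by linarith [hpa2.2]
    have hb2d : d2 < b2 := by linarith [hpb2.2]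
    have hPb : 1 < -(P2 - b2) := by
      rcases abs_cases (P2-b2) with ⟨hc', _⟩ | ⟨hc', _⟩ <;> rw [hc'] at hb2
      · linarith [hPd2.2]
      · exact hb2
    have he2b : e2 < b2 := by linarith [hPe2.1]
    rcases le_or_gt b2 a2 with hcmp | hcmp
    · have hl : b2 ≤ (1-t)*a2 + t*b2 := cvx_ge _ _ _ _ ht0 ht1 hcmp le_rfl
      have hr : (1-u)*d2 + u*e2 < b2 := cvx_lt _ _ _ _ hu0 hu1 hb2d he2b
      linarith
    · have hab1 : a1 < b1 := by
        rcases lt_or_eq_of_le (le_trans had hdb) with h | h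
        · exact h
        · have h1' : a1 = d1 := le_antisymm had (h ▸ hdb)
          linarith [tad h1']
      have fd : (b1-a1)*(d2-a2) - (b2-a2)*(d1-a1) < 0 := by
        have A : (b1-a1)*(d2-a2) < 0 :=
          mul_neg_of_pos_of_neg (sub_pos.2 hab1) (by linarith)
        have B : 0 ≤ (b2-a2)*(d1-a1) :=
          mul_nonneg (by linarith) (by linarith)
        linarith
      have fe : (b1-a1)*(e2-a2) - (b2-a2)*(e1-a1) < 0 := by
        have idq : (b1-a1)*(e2-a2) - (b2-a2)*(e1-a1)
            = (b1-a1)*(e2-b2) - (b2-a2)*(e1-b1) := by ring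
        rw [idq]
        have A : (b1-a1)*(e2-b2) < 0 :=
          mul_neg_of_pos_of_neg (sub_pos.2 hab1) (by linarith)
        have B : 0 ≤ (b2-a2)*(e1-b1) :=
          mul_nonneg (by linarith) (by linarith)
        linarith
      have := cvx_lt _ _ 0 u hu0 hu1 fd fe
      linarith
  · -- Case A : d strictly above p-band, d2 > p2 + 1
    have ha2d : a2 < d2 := by linarith [hpa2.1]
    have hb2d : b2 < d2 := by linarith [hpb2.1]
    have hPb : 1 < P2 - b2 := by
      rcases abs_cases (P2-b2) with ⟨hc', _⟩ | ⟨hc', _⟩ <;> rw [hc'] at hb2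
      · exact hb2
      · linarith [hPd2.1]
    have he2b : b2 < e2 := by linarith [hPe2.2]
    rcases le_or_gt a2 b2 with hcmp | hcmp
    · have hl : (1-t)*a2 + t*b2 ≤ b2 := cvx_le _ _ _ _ ht0 ht1 hcmp le_rfl
      have hr : b2 < (1-u)*d2 + u*e2 := cvx_gt _ _ _ _ hu0 hu1 hb2d he2b
      linarith
    · have hab1 : a1 < b1 := by
        rcases lt_or_eq_of_le (le_trans had hdb) with h | h
        · exact h
        · have h1' : a1 = d1 := le_antisymm had (h ▸ hdb)
          have h2' : d1 = b1 := by rw [← h1', h]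
          linarith [tad h1', tdb h2']
      have fd : 0 < (b1-a1)*(d2-a2) - (b2-a2)*(d1-a1) := by
        have A : 0 < (b1-a1)*(d2-a2) :=
          mul_pos (sub_pos.2 hab1) (by linarith)
        have B : (b2-a2)*(d1-a1) ≤ 0 :=
          mul_nonpos_of_nonpos_of_nonneg (by linarith) (by linarith)
        linarith
      have fe : 0 < (b1-a1)*(e2-a2) - (b2-a2)*(e1-a1) := by
        have idq : (b1-a1)*(e2-a2) - (b2-a2)*(e1-a1)
            = (b1-a1)*(e2-b2) - (b2-a2)*(e1-b1) := by ring
        rw [idq]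
        have A : 0 < (b1-a1)*(e2-b2) :=
          mul_pos (sub_pos.2 hab1) (by linarith)
        have B : (b2-a2)*(e1-b1) ≤ 0 :=
          mul_nonpos_of_nonpos_of_nonneg (by linarith) (by linarith)
        linarith
      have := cvx_gt _ _ 0 u hu0 hu1 fd fe
      linarith

lemma case5R (a1 a2 b1 b2 d1 d2 e1 e2 p1 p2 P2 t u : ℝ)
    (ht0 : 0 ≤ t) (ht1 : t ≤ 1) (hu0 : 0 ≤ u) (hu1 : u ≤ 1)
    (had : a1 ≤ d1) (hdb : d1 ≤ b1) (hae : a1 ≤ e1) (heb : e1 ≤ b1)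
    (hpa1 : |p1-a1| ≤ 1) (hpa2 : |p2-a2| ≤ 1) (hpb1 : |p1-b1| ≤ 1) (hpb2 : |p2-b2| ≤ 1)
    (hnd : ¬(|p1-d1| ≤ 1 ∧ |p2-d2| ≤ 1)) (hne : ¬(|p1-e1| ≤ 1 ∧ |p2-e2| ≤ 1))
    (hPd2 : |P2-d2| ≤ 1) (hPe2 : |P2-e2| ≤ 1)
    (h1 : (1-t)*a1 + t*b1 = (1-u)*d1 + u*e1)
    (h2 : (1-t)*a2 + t*b2 = (1-u)*d2 + u*e2) : False := by
  rw [abs_le] at hpa1 hpa2 hpb1 hpb2 hPd2 hPe2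
  have hd1 : |p1-d1| ≤ 1 := abs_le.2 ⟨by linarith [hpb1.1], by linarith [hpa1.2]⟩
  have he1 : |p1-e1| ≤ 1 := abs_le.2 ⟨by linarith [hpb1.1], by linarith [hpa1.2]⟩
  have hd2 : 1 < |p2-d2| := not_le.1 fun h => hnd ⟨hd1, h⟩
  have he2 : 1 < |p2-e2| := not_le.1 fun h => hne ⟨he1, h⟩
  rcases abs_cases (p2-d2) with ⟨hc, _⟩ | ⟨hc, _⟩ <;> rw [hc] at hd2 <;>
  rcases abs_cases (p2-e2) with ⟨hc', _⟩ | ⟨hc', _⟩ <;> rw [hc'] at he2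
  · -- d below, e below : d2 < p2-1, e2 < p2-1
    have hr : (1-u)*d2 + u*e2 < p2-1 := cvx_lt _ _ _ _ hu0 hu1 (by linarith) (by linarith)
    have hl : p2-1 ≤ (1-t)*a2 + t*b2 :=
      cvx_ge _ _ _ _ ht0 ht1 (by linarith [hpa2.2]) (by linarith [hpb2.2])
    linarith
  · linarith [hPd2.1, hPd2.2, hPe2.1, hPe2.2]
  · linarith [hPd2.1, hPd2.2, hPe2.1, hPe2.2]
  · -- d above, e above
    have hr : p2+1 < (1-u)*d2 + u*e2 := cvx_gt _ _ _ _ hu0 hu1 (by linarith) (by linarith)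
    have hl : (1-t)*a2 + t*b2 ≤ p2+1 :=
      cvx_le _ _ _ _ ht0 ht1 (by linarith [hpa2.1]) (by linarith [hpb2.1])
    linarith


lemma stmt7_aux {n : ℕ} (c : Fin n → ℝ × ℝ)
    (hlex : ∀ i j : Fin n, i < j → LexLt (c i) (c j))
    (i j k l : Fin n) (hij : i < j) (hkl : k < l) (hik : i < k)
    (hjk : j ≠ k) (hjl : j ≠ l)
    (hSij : Sees c i j) (hSkl : Sees c k l)
    (q : ℝ × ℝ) (hq1 : q ∈ segment ℝ (c i) (c j)) (hq2 : q ∈ segment ℝ (c k) (c l)) :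
    False := by
  obtain ⟨p, ⟨hpa, hpb⟩, hpav⟩ := hSij
  obtain ⟨P, ⟨hPd, hPe⟩, hPav⟩ := hSkl
  rw [segment_eq_image] at hq1 hq2
  obtain ⟨t, ⟨ht0, ht1⟩, htq⟩ := hq1
  obtain ⟨u, ⟨hu0, hu1⟩, huq⟩ := hq2
  have hqq := htq.trans huq.symm
  have h1 : (1-t)*(c i).1 + t*(c j).1 = (1-u)*(c k).1 + u*(c l).1 := by
    have := congrArg Prod.fst hqq; simpa using this
  have h2 : (1-t)*(c i).2 + t*(c j).2 = (1-u)*(c k).2 + u*(c l).2 := by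
    have := congrArg Prod.snd hqq; simpa using this
  rw [mem_unitSq] at hpa hpb hPd hPe
  have lexle : ∀ {x y : Fin n}, x < y → (c x).1 ≤ (c y).1 := by
    intro x y h; rcases hlex x y h with h' | ⟨h', _⟩ <;> linarith
  have lextie : ∀ {x y : Fin n}, x < y → ((c x).1 = (c y).1 → (c x).2 < (c y).2) := by
    intro x y h h'; rcases hlex x y h with h'' | ⟨_, h''⟩
    · exact absurd h' (ne_of_lt h'')
    · exact h''
  rcases lt_trichotomy j k with hjk' | hjk' | hjk'
  · exact case1R (c i).1 (c i).2 (c j).1 (c j).2 (c k).1 (c k).2 (c l).1 (c l).2 t u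
      ht0 ht1 hu0 hu1 (hlex i j hij) (hlex j k hjk') (hlex k l hkl) h1 h2
  · exact hjk hjk'
  · rcases lt_trichotomy j l with hjl' | hjl' | hjl'
    · -- i < k < j < l
      have hnd : ¬(|p.1-(c k).1| ≤ 1 ∧ |p.2-(c k).2| ≤ 1) :=
        fun h => hpav k hik hjk' (mem_unitSq.2 h)
      have hnb : ¬(|P.1-(c j).1| ≤ 1 ∧ |P.2-(c j).2| ≤ 1) :=
        fun h => hPav j hjk' hjl' (mem_unitSq.2 h)
      exact case3R (c i).1 (c i).2 (c j).1 (c j).2 (c k).1 (c k).2 (c l).1 (c l).2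
        p.1 p.2 P.1 P.2 t u ht0 ht1 hu0 hu1
        (lexle hik) (lexle hjk') (lexle hjl')
        (lextie hik) (lextie hjk')
        hpa.1 hpa.2 hpb.1 hpb.2 hnd hPd.1 hPd.2 hPe.1 hPe.2 hnb h1 h2
    · exact hjl hjl'
    · -- i < k < l < j
      have hnd : ¬(|p.1-(c k).1| ≤ 1 ∧ |p.2-(c k).2| ≤ 1) :=
        fun h => hpav k hik (hkl.trans hjl') (mem_unitSq.2 h)
      have hne : ¬(|p.1-(c l).1| ≤ 1 ∧ |p.2-(c l).2| ≤ 1) :=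
        fun h => hpav l (hik.trans hkl) hjl' (mem_unitSq.2 h)
      exact case5R (c i).1 (c i).2 (c j).1 (c j).2 (c k).1 (c k).2 (c l).1 (c l).2
        p.1 p.2 P.2 t u ht0 ht1 hu0 hu1
        (lexle hik) (lexle (hkl.trans hjl')) (lexle (hik.trans hkl)) (lexle hjl')
        hpa.1 hpa.2 hpb.1 hpb.2 hnd hne hPd.2 hPe.2 h1 h2

/-- Lemma 2 (plane-embedding form): in the lexicographic ranking, for any two
vertex-disjoint pairs of indices whose center segments meet, at most one of the
two pairs is a visibility edge. Hence mapping each square to its center gives a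
straight-line plane embedding of the visibility graph. -/
theorem stmt_7 {n : ℕ} (c : Fin n → ℝ × ℝ)
    (hlex : ∀ i j : Fin n, i < j → LexLt (c i) (c j))
    (i j k l : Fin n) (hij : i < j) (hkl : k < l)
    (hik : i ≠ k) (hil : i ≠ l) (hjk : j ≠ k) (hjl : j ≠ l)
    (hcross : (segment ℝ (c i) (c j) ∩ segment ℝ (c k) (c l)).Nonempty) :
    ¬ (Sees c i j ∧ Sees c k l) := by
  rintro ⟨hSij, hSkl⟩
  obtain ⟨q, hq1, hq2⟩ := hcross
  rcases lt_or_gt_of_ne hik with h | h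
  · exact stmt7_aux c hlex i j k l hij hkl h hjk hjl hSij hSkl q hq1 hq2
  · exact stmt7_aux c hlex k l i j hkl hij h hil.symm hjl.symm hSkl hSij q hq2 hq1
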